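/- Let M and M' be monoids, f, g : M → M' semigroup homomorphisms, and α : f ⇒ g a conjugation. Then there exists a conjugation γ : g ⇒ f with α*γ = f(1) and γ*α = g(1) (i.e., α is an invertible conjugation) if and only if there exists an element β ∈ M' with α*β = f(1) and β*α = g(1). Moreover, in that case the element γ = β*α*β is a conjugation from g to f satisfying α*γ = f(1) and γ*α = g(1). -/
import Mathlib


universe u v

/-- A conjugation `α : f ⇒ g` between semigroup homomorphisms of monoids:
`f(1)*α = α = α*g(1)` and `f(m)*α = α*g(m)` for every `m`. -/
def IsConjugation {M : Type u} {N : Type v} [Monoid M] [Monoid N]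
    (f g : M → N) (α : N) : Prop :=
  f 1 * α = α ∧ α * g 1 = α ∧ ∀ m : M, f m * α = α * g m

/-- Let `M`, `M'` be monoids, `f, g : M → M'` semigroup
homomorphisms, and `α : f ⇒ g` a conjugation. Then there exists a conjugation
`γ : g ⇒ f` with `α*γ = f(1)` and `γ*α = g(1)` (i.e. `α` is invertible) iff there
exists `β ∈ M'` with `α*β = f(1)` and `β*α = g(1)`. Moreover, in that case
`γ = β*α*β` is a conjugation from `g` to `f` with `α*γ = f(1)` and `γ*α = g(1)`. -/
theorem invertible_conjugation_iff {M : Type u} {M' : Type v} [Monoid M] [Monoid M']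
    (f g : M → M') (hf : ∀ a b : M, f (a * b) = f a * f b)
    (hg : ∀ a b : M, g (a * b) = g a * g b)
    (α : M') (hα : IsConjugation f g α) :
    ((∃ γ : M', IsConjugation g f γ ∧ α * γ = f 1 ∧ γ * α = g 1) ↔
      (∃ β : M', α * β = f 1 ∧ β * α = g 1)) ∧
    (∀ β : M', α * β = f 1 → β * α = g 1 →
      IsConjugation g f (β * α * β) ∧ α * (β * α * β) = f 1 ∧ β * α * β * α = g 1) := by
  obtain ⟨h1, h2, h3⟩ := hα
  have hf1 : f 1 * f 1 = f 1 := by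
    have := hf 1 1; simpa using this.symm
  have hg1 : g 1 * g 1 = g 1 := by
    have := hg 1 1; simpa using this.symm
  have main : ∀ β : M', α * β = f 1 → β * α = g 1 →
      IsConjugation g f (β * α * β) ∧ α * (β * α * β) = f 1 ∧ β * α * β * α = g 1 := by
    intro β hβ1 hβ2
    have key : ∀ m : M, β * f m = g m * β := by
      intro m
      calc β * f m
          = β * f (m * 1) := by rw [mul_one]
        _ = β * (f m * f 1) := by rw [hf]
        _ = β * (f m * (α * β)) := by rw [hβ1]
        _ = β * (f m * α) * β := by simp [mul_assoc]
        _ = β * (α * g m) * β := by rw [h3]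
        _ = (β * α) * (g m * β) := by simp [mul_assoc]
        _ = g 1 * (g m * β) := by rw [hβ2]
        _ = (g 1 * g m) * β := by rw [mul_assoc]
        _ = g (1 * m) * β := by rw [hg]
        _ = g m * β := by rw [one_mul]
    have hγ : β * α * β = g 1 * β := by rw [hβ2]
    have hγ' : β * α * β = β * f 1 := by rw [mul_assoc, hβ1]
    refine ⟨⟨?_, ?_, ?_⟩, ?_, ?_⟩
    · rw [hγ, ← mul_assoc, hg1]
    · rw [hγ', mul_assoc, hf1]
    · intro m
      calc g m * (β * α * β) = g m * (g 1 * β) := by rw [hγ]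
        _ = (g m * g 1) * β := by rw [mul_assoc]
        _ = g (m * 1) * β := by rw [hg]
        _ = g m * β := by rw [mul_one]
        _ = β * f m := (key m).symm
        _ = β * (f 1 * f m) := by rw [← hf, one_mul]
        _ = (β * f 1) * f m := by rw [mul_assoc]
        _ = β * α * β * f m := by rw [hγ']
    · calc α * (β * α * β) = (α * β) * (α * β) := by simp [mul_assoc]
        _ = f 1 * f 1 := by rw [hβ1]
        _ = f 1 := hf1
    · calc β * α * β * α = (β * α) * (β * α) := by simp [mul_assoc]
        _ = g 1 * g 1 := by rw [hβ2]
        _ = g 1 := hg1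
  refine ⟨⟨fun ⟨γ, _, hc1, hc2⟩ => ⟨γ, hc1, hc2⟩, fun ⟨β, hb1, hb2⟩ => ?_⟩, main⟩
  obtain ⟨hc, hc1, hc2⟩ := main β hb1 hb2
  exact ⟨β * α * β, hc, hc1, hc2⟩
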